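/- arXiv:2210.09092 — 2 statements merged into one kernel-verified Lean document; each statement's English description precedes it below -/
import Mathlib

section
/- For two finite multisets of real numbers of the same cardinality n, the infimum over all bijections τ of (Σ_x |x − τ(x)|^r)^{1/r} (for r ≥ 1) is achieved by the bijection τ* that matches the i-th smallest element of the first multiset to the i-th smallest element of the second, for every i. -/
/-!
A cost `c i j` on a linearly ordered index set is *Monge* if uncrossing two matched pairs never
increases the cost. For such a cost the identity matching is optimal: given any permutation `σ`,
redirect the largest index `m` it moves to `m` itself by a transposition; this uncrosses the pairs
`(σ⁻¹ m, m)` and `(m, σ m)` and moves fewer indices, so induction applies. For sorted reals `a, b`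
and a convex `f`, the cost `f (a i - b j)` is Monge, since `a i - b j` and `a i' - b j'` lie between
`a i - b j'` and `a i' - b j` and have the same sum. Finally `|x| ^ r` is convex for `r ≥ 1`.
-/

open Finset Equiv

theorem convexOn_univ_norm_rpow {E : Type*} [SeminormedAddCommGroup E] [NormedSpace ℝ E]
    {p : ℝ} (hp : 1 ≤ p) : ConvexOn ℝ Set.univ fun x : E => ‖x‖ ^ p := by
  refine ⟨convex_univ, fun x _ y _ a b ha hb hab => ?_⟩
  calc ‖a • x + b • y‖ ^ p ≤ (a • ‖x‖ + b • ‖y‖) ^ p := by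
        gcongr
        simpa [norm_smul, abs_of_nonneg ha, abs_of_nonneg hb] using norm_add_le (a • x) (b • y)
    _ ≤ a • ‖x‖ ^ p + b • ‖y‖ ^ p :=
        (convexOn_rpow hp).2 (norm_nonneg x) (norm_nonneg y) ha hb hab

def IsMonge {ι β : Type*} [LE ι] [Add β] [LE β] (c : ι → ι → β) : Prop :=
  ∀ ⦃i i' j j'⦄, i ≤ i' → j ≤ j' → c i j + c i' j' ≤ c i j' + c i' j

section Convex

variable {𝕜 β : Type*} [Field 𝕜] [LinearOrder 𝕜] [IsStrictOrderedRing 𝕜]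
  [AddCommMonoid β] [PartialOrder β] [IsOrderedAddMonoid β] [Module 𝕜 β]

theorem ConvexOn.map_add_map_le_of_mem_Icc {S : Set 𝕜} {f : 𝕜 → β} (hf : ConvexOn 𝕜 S f)
    {s t p q : 𝕜} (hs : s ∈ S) (ht : t ∈ S) (hp : p ∈ Set.Icc s t) (hpq : p + q = s + t) :
    f p + f q ≤ f s + f t := by
  obtain ⟨a, b, ha, hb, hab, rfl⟩ := Icc_subset_segment hp
  have hq : q = b • s + a • t := by
    simp only [smul_eq_mul] at hpq ⊢
    linear_combination hpq - (s + t) * hab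
  calc f (a • s + b • t) + f q ≤ (a • f s + b • f t) + (b • f s + a • f t) :=
        add_le_add (hf.2 hs ht ha hb hab) (hq ▸ hf.2 hs ht hb ha ((add_comm b a).trans hab))
    _ = (a + b) • f s + (a + b) • f t := by module
    _ = f s + f t := by rw [hab, one_smul, one_smul]

theorem ConvexOn.isMonge_comp_sub {ι : Type*} [Preorder ι] {f : 𝕜 → β}
    (hf : ConvexOn 𝕜 Set.univ f) {a b : ι → 𝕜} (ha : Monotone a) (hb : Monotone b) : IsMonge fun i j => f (a i - b j) := by
  intro i i' j j' hi hj
  exact hf.map_add_map_le_of_mem_Icc trivial trivial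
    ⟨sub_le_sub_left (hb hj) _, sub_le_sub_right (ha hi) _⟩ (by ring)

end Convex

namespace IsMonge

variable {ι β : Type*} [Fintype ι] [LinearOrder ι]
  [AddCommGroup β] [PartialOrder β] [IsOrderedAddMonoid β] {c : ι → ι → β}

theorem sum_swap_mul_le (hc : IsMonge c) (σ : Perm ι) {m : ι} (h₁ : σ.symm m ≤ m)
    (h₂ : σ m ≤ m) : ∑ i, c i ((swap m (σ m) * σ) i) ≤ ∑ i, c i (σ i) := by
  set x := σ.symm m
  obtain hxm | hxm := eq_or_ne x m
  · simp [(σ.symm_apply_eq.1 hxm).symm]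
  have hσx : σ x = m := σ.apply_symm_apply m
  rw [← sub_nonneg, ← sum_sub_distrib, Fintype.sum_eq_add x m hxm]
  · simp only [Perm.mul_apply, hσx, swap_apply_left, swap_apply_right]
    rw [sub_add_sub_comm, sub_nonneg]
    exact hc h₁ h₂
  · rintro i ⟨hix, him⟩
    have hσi : σ i ≠ m := hσx ▸ σ.injective.ne hix
    rw [Perm.mul_apply, swap_apply_of_ne_of_ne hσi (σ.injective.ne him), sub_self]

theorem sum_le_sum_comp_perm_of_support_subset (hc : IsMonge c) {s : Finset ι} {σ : Perm ι}
    (hσ : σ.support ⊆ s) : ∑ i, c i i ≤ ∑ i, c i (σ i) := by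
  induction s using Finset.induction_on_max generalizing σ with
  | empty => simp [Perm.support_eq_empty_iff.1 (subset_empty.1 hσ)]
  | insert m s hlt ih =>
    have hle : ∀ i ∈ σ.support, i ≤ m := fun i hi =>
      (mem_insert.1 (hσ hi)).elim le_of_eq fun h => (hlt i h).le
    have hs : ∀ i ∈ σ.support, i ≠ m → i ∈ s := fun i hi him =>
      (mem_insert.1 (hσ hi)).resolve_left him
    by_cases hm : m ∈ σ.support
    · refine (ih fun i hi => ?_).trans (hc.sum_swap_mul_le σ (m := m) ?_ ?_)
      · obtain ⟨hi, him⟩ := Perm.mem_support_swap_mul_imp_mem_support_ne hi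
        exact hs i hi him
      · exact hle _ (by rwa [← Perm.apply_mem_support, apply_symm_apply])
      · exact hle _ (Perm.apply_mem_support.2 hm)
    · exact ih fun i hi => hs i hi (ne_of_mem_of_not_mem hi hm)

theorem sum_le_sum_comp_perm (hc : IsMonge c) (σ : Perm ι) :
    ∑ i, c i i ≤ ∑ i, c i (σ i) :=
  hc.sum_le_sum_comp_perm_of_support_subset (subset_univ _)

end IsMonge

/-- The monotone (sorted-order) matching minimizes the `r`-Wasserstein cost:
for sorted vectors `a b : Fin n → ℝ` (representing two multisets of reals of the
same cardinality `n` listed in increasing order) and any `r ≥ 1`, the value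
`(∑ i, |a i - b i| ^ r) ^ (1/r)` is the least element of the set of costs
`(∑ i, |a i - b (σ i)| ^ r) ^ (1/r)` over all bijections `σ`. -/
theorem sorted_matching_isLeast_wasserstein
    {n : ℕ} (a b : Fin n → ℝ) (ha : Monotone a) (hb : Monotone b)
    (r : ℝ) (hr : 1 ≤ r) :
    IsLeast
      (Set.range fun σ : Equiv.Perm (Fin n) =>
        (∑ i, |a i - b (σ i)| ^ r) ^ (1 / r))
      ((∑ i, |a i - b i| ^ r) ^ (1 / r)) := by
  have hmonge : IsMonge fun i j => |a i - b j| ^ r := by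
    simpa only [Real.norm_eq_abs] using (convexOn_univ_norm_rpow hr).isMonge_comp_sub ha hb
  refine ⟨⟨1, by simp⟩, ?_⟩
  rintro _ ⟨σ, rfl⟩
  exact Real.rpow_le_rpow (by positivity) (hmonge.sum_le_sum_comp_perm σ) (by positivity)
end

section
/- For sorted lists a_1 ≤ … ≤ a_n and b_1 ≤ … ≤ b_n of real numbers and any permutation σ of {1,…,n}: max_i |a_i − b_{σ(i)}| ≥ max_i |a_i − b_i|. -/
open Finset

private lemma pigeon_aux {n : ℕ} (σ : Equiv.Perm (Fin n)) (i : Fin n) :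
    ∃ j : Fin n, i ≤ j ∧ σ j ≤ i := by
  classical
  set S : Finset (Fin n) := Finset.Ici i
  set T : Finset (Fin n) := (Finset.Iic i).map σ.symm.toEmbedding
  have hS : S.card = n - i := Fin.card_Ici i
  have hT : T.card = i + 1 := by
    rw [Finset.card_map, Fin.card_Iic]
  have hsum : S.card + T.card = n + 1 := by
    rw [hS, hT]
    omega
  have hinter : (S ∩ T).Nonempty := by
    rw [← Finset.card_pos]
    have h1 := Finset.card_union_add_card_inter S T
    have h2 : (S ∪ T).card ≤ n := by
      simpa using Finset.card_le_univ (S ∪ T)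
    omega
  obtain ⟨j, hj⟩ := hinter
  rw [Finset.mem_inter] at hj
  obtain ⟨hj1, hj2⟩ := hj
  refine ⟨j, Finset.mem_Ici.mp hj1, ?_⟩
  rw [Finset.mem_map] at hj2
  obtain ⟨k, hk, hkj⟩ := hj2
  have : σ j = k := by
    simp only [Equiv.coe_toEmbedding] at hkj
    rw [← hkj]; simp
  rw [this]
  exact Finset.mem_Iic.mp hk

/-- Bottleneck optimality of the monotone matching in one dimension: for sorted
lists `a₁ ≤ … ≤ aₙ` and `b₁ ≤ … ≤ bₙ` of real numbers and any permutation `σ`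
of `{1,…,n}`, we have `max_i |a i - b (σ i)| ≥ max_i |a i - b i|`. -/
theorem sorted_sup_abs_le
    {n : ℕ} (hn : 0 < n) (a b : Fin n → ℝ) (ha : Monotone a) (hb : Monotone b)
    (σ : Equiv.Perm (Fin n)) :
    (Finset.univ.sup' ⟨⟨0, hn⟩, Finset.mem_univ _⟩ fun i => |a i - b i|) ≤
      Finset.univ.sup' ⟨⟨0, hn⟩, Finset.mem_univ _⟩ fun i => |a i - b (σ i)| := by
  apply Finset.sup'_le
  intro i _
  rcases le_total (b i) (a i) with h | h
  · obtain ⟨j, hj1, hj2⟩ := pigeon_aux σ i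
    have key : |a i - b i| ≤ |a j - b (σ j)| := by
      have h1 := ha hj1
      have h2 := hb hj2
      rw [abs_of_nonneg (by linarith)]
      calc a i - b i ≤ a j - b (σ j) := by linarith
        _ ≤ |a j - b (σ j)| := le_abs_self _
    exact key.trans (Finset.le_sup' (fun i => |a i - b (σ i)|) (Finset.mem_univ j))
  · obtain ⟨j, hj1, hj2⟩ := pigeon_aux σ.symm i
    set k := σ.symm j with hk
    have hσk : σ k = j := by simp [hk]
    have h1 : a k ≤ a i := ha hj2
    have h2 : b i ≤ b (σ k) := by rw [hσk]; exact hb hj1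
    have key : |a i - b i| ≤ |a k - b (σ k)| := by
      rw [abs_of_nonpos (by linarith)]
      calc -(a i - b i) = b i - a i := by ring
        _ ≤ b (σ k) - a k := by linarith
        _ ≤ |a k - b (σ k)| := by rw [abs_sub_comm]; exact le_abs_self _
    exact key.trans (Finset.le_sup' (fun i => |a i - b (σ i)|) (Finset.mem_univ k))
end
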